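/- arXiv:1906.09158 — 3 statements merged into one kernel-verified Lean document; each statement's English description precedes it below -/
import Mathlib

section
/- Let O be a point, α ∈ (0, π/2), and let C, C' be points with angle ∠C O C' = α. The circumcenter of triangle O C C' lies strictly inside the angular sector bounded by rays OC and OC' if and only if |OC|·cos α < |OC'| < |OC|/cos α. -/
/-!
Put `u = C - O`, `v = C' - O`, `w = V - O`, `a = ‖u‖`, `b = ‖v‖`, `θ = ∠(u, v)`. Equidistance
from `O` and `C` says `⟪w, u⟫ = a² / 2`, and likewise `⟪w, v⟫ = b² / 2`. Since `0 < θ < π`, the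
vectors `u`, `v` form a basis of the plane. The Gram system for `w = s • u + t • v` has
determinant `a² b² sin² θ`, and Cramer's rule gives
`a² b² sin² θ · s = a b² (a - b cos θ) / 2` and `a² b² sin² θ · t = a² b (b - a cos θ) / 2`.
Hence `s, t > 0` exactly when `a cos θ < b < a / cos θ`.
-/

open Real InnerProductGeometry RealInnerProductSpace Module

section InnerProductSpace

variable {E : Type*} [NormedAddCommGroup E] [InnerProductSpace ℝ E]

lemma inner_eq_half_norm_sq_of_norm_eq_norm_sub {w u : E} (h : ‖w‖ = ‖w - u‖) :
    ⟪w, u⟫ = ‖u‖ ^ 2 / 2 := by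
  have := norm_sub_sq_real w u
  rw [← h] at this
  linarith

lemma norm_sq_mul_norm_sq_mul_sin_sq_angle_mul (u v : E) (s t : ℝ) :
    ‖u‖ ^ 2 * ‖v‖ ^ 2 * sin (angle u v) ^ 2 * s =
      ‖v‖ ^ 2 * ⟪s • u + t • v, u⟫ - ‖u‖ * ‖v‖ * cos (angle u v) * ⟪s • u + t • v, v⟫ := by
  simp only [inner_add_left, real_inner_smul_left, real_inner_self_eq_norm_sq,
    real_inner_comm u v, ← cos_angle_mul_norm_mul_norm u v, sin_sq]
  ring

lemma linearIndependent_pair_of_sin_angle_ne_zero {u v : E} (hu : u ≠ 0) (hv : v ≠ 0)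
    (h : sin (angle u v) ≠ 0) : LinearIndependent ℝ ![u, v] := by
  rw [LinearIndependent.pair_iff]
  intro s t hst
  have hs := norm_sq_mul_norm_sq_mul_sin_sq_angle_mul u v s t
  have ht := norm_sq_mul_norm_sq_mul_sin_sq_angle_mul v u t s
  rw [hst] at hs
  rw [add_comm, hst, angle_comm] at ht
  simp only [inner_zero_left, mul_zero, sub_zero, mul_eq_zero, pow_eq_zero_iff two_ne_zero,
    norm_eq_zero] at hs ht
  tauto

lemma exists_smul_add_smul_eq_of_finrank_eq_two (hE : finrank ℝ E = 2) {u v : E}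
    (huv : LinearIndependent ℝ ![u, v]) (w : E) : ∃ s t : ℝ, s • u + t • v = w := by
  have : FiniteDimensional ℝ E := .of_finrank_pos (by omega)
  have hspan := huv.span_eq_top_of_card_eq_finrank' (by simp [hE])
  rw [Matrix.range_cons, Matrix.range_cons, Matrix.range_empty, Set.union_empty,
    Set.singleton_union] at hspan
  exact Submodule.mem_span_pair.1 (hspan ▸ Submodule.mem_top)

variable {u v w : E}

lemma pos_and_pos_iff_of_eq_smul_add_smul {s t : ℝ} (h₀ : 0 < angle u v) (h₁ : angle u v < π / 2)
    (hwu : ⟪w, u⟫ = ‖u‖ ^ 2 / 2) (hwv : ⟪w, v⟫ = ‖v‖ ^ 2 / 2) (hw : w = s • u + t • v) :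
    0 < s ∧ 0 < t ↔ ‖u‖ * cos (angle u v) < ‖v‖ ∧ ‖v‖ < ‖u‖ / cos (angle u v) := by
  have hu : 0 < ‖u‖ := norm_pos_iff.2 fun h ↦ by simp [h] at h₁
  have hv : 0 < ‖v‖ := norm_pos_iff.2 fun h ↦ by simp [h] at h₁
  have hcos : 0 < cos (angle u v) := cos_pos_of_mem_Ioo ⟨by linarith, h₁⟩
  have hsin : 0 < sin (angle u v) := sin_pos_of_pos_of_lt_pi h₀ (by linarith)
  have hK : 0 < ‖u‖ ^ 2 * ‖v‖ ^ 2 * sin (angle u v) ^ 2 := by positivity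
  have hs : ‖u‖ ^ 2 * ‖v‖ ^ 2 * sin (angle u v) ^ 2 * s =
      ‖u‖ * ‖v‖ ^ 2 / 2 * (‖u‖ - ‖v‖ * cos (angle u v)) := by
    rw [norm_sq_mul_norm_sq_mul_sin_sq_angle_mul u v s t, ← hw, hwu, hwv]; ring
  have ht : ‖u‖ ^ 2 * ‖v‖ ^ 2 * sin (angle u v) ^ 2 * t =
      ‖u‖ ^ 2 * ‖v‖ / 2 * (‖v‖ - ‖u‖ * cos (angle u v)) := by
    rw [mul_comm (‖u‖ ^ 2), ← angle_comm, norm_sq_mul_norm_sq_mul_sin_sq_angle_mul v u t s,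
      add_comm, ← hw, hwu, hwv]
    ring
  rw [← mul_pos_iff_of_pos_left hK, hs, mul_pos_iff_of_pos_left (by positivity), sub_pos,
    ← mul_pos_iff_of_pos_left hK (b := t), ht, mul_pos_iff_of_pos_left (by positivity), sub_pos,
    lt_div_iff₀ hcos]
  exact and_comm

theorem exists_pos_smul_add_smul_eq_iff (hE : finrank ℝ E = 2) (h₀ : 0 < angle u v)
    (h₁ : angle u v < π / 2) (hwu : ⟪w, u⟫ = ‖u‖ ^ 2 / 2) (hwv : ⟪w, v⟫ = ‖v‖ ^ 2 / 2) :
    (∃ s t : ℝ, 0 < s ∧ 0 < t ∧ w = s • u + t • v) ↔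
      ‖u‖ * cos (angle u v) < ‖v‖ ∧ ‖v‖ < ‖u‖ / cos (angle u v) := by
  constructor
  · rintro ⟨s, t, hs, ht, hw⟩
    exact (pos_and_pos_iff_of_eq_smul_add_smul h₀ h₁ hwu hwv hw).1 ⟨hs, ht⟩
  · intro h
    have hu : u ≠ 0 := fun hu ↦ by simp [hu] at h₁
    have hv : v ≠ 0 := fun hv ↦ by simp [hv] at h₁
    have hsin : sin (angle u v) ≠ 0 := (sin_pos_of_pos_of_lt_pi h₀ (by linarith)).ne'
    obtain ⟨s, t, hw⟩ := exists_smul_add_smul_eq_of_finrank_eq_two hE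
      (linearIndependent_pair_of_sin_angle_ne_zero hu hv hsin) w
    have := (pos_and_pos_iff_of_eq_smul_add_smul h₀ h₁ hwu hwv hw.symm).2 h
    exact ⟨s, t, this.1, this.2, hw.symm⟩

end InnerProductSpace

theorem circumcenter_in_sector_iff_general
    (O C C' V : ℂ) (α : ℝ)
    (hα₀ : 0 < α) (hα₁ : α < π / 2)
    (hangle : EuclideanGeometry.angle C O C' = α)
    (hV : dist V O = dist V C ∧ dist V O = dist V C') :
    (∃ s t : ℝ, 0 < s ∧ 0 < t ∧ V = O + (s : ℂ) * (C - O) + (t : ℂ) * (C' - O)) ↔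
      (dist O C * Real.cos α < dist O C' ∧ dist O C' < dist O C / Real.cos α) := by
  have hequidist (P : ℂ) (h : dist V O = dist V P) : ⟪V - O, P - O⟫ = ‖P - O‖ ^ 2 / 2 := by
    rw [dist_eq_norm, dist_eq_norm, ← sub_sub_sub_cancel_right V P O] at h
    exact inner_eq_half_norm_sq_of_norm_eq_norm_sub h
  rw [← show angle (C - O) (C' - O) = α from hangle] at hα₀ hα₁ ⊢
  rw [dist_comm O C, dist_comm O C', dist_eq_norm, dist_eq_norm,
    ← exists_pos_smul_add_smul_eq_iff Complex.finrank_real_complex hα₀ hα₁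
      (hequidist C hV.1) (hequidist C' hV.2)]
  simp only [Complex.real_smul, add_assoc, sub_eq_iff_eq_add']

/-- Let `O`, `C`, `C'` be points of the Euclidean plane `ℂ` with
`O ≠ C`, `O ≠ C'`, and angle `∠C O C' = α`, `0 < α < π/2`.  The circumcenter
`V` of triangle `O C C'` (the point equidistant from `O`, `C`, `C'`) lies
strictly inside the open angular sector bounded by the rays `OC` and `OC'`
(the set `{O + s(C−O) + t(C'−O) : s > 0, t > 0}`) if and only if
`|OC|·cos α < |OC'| < |OC| / cos α`. -/
theorem circumcenter_in_sector_iff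
    (O C C' V : ℂ) (α : ℝ)
    (hC : O ≠ C) (hC' : O ≠ C')
    (hα₀ : 0 < α) (hα₁ : α < π / 2)
    (hangle : EuclideanGeometry.angle C O C' = α)
    (hV : dist V O = dist V C ∧ dist V O = dist V C') :
    (∃ s t : ℝ, 0 < s ∧ 0 < t ∧ V = O + (s : ℂ) * (C - O) + (t : ℂ) * (C' - O)) ↔
      (dist O C * Real.cos α < dist O C' ∧ dist O C' < dist O C / Real.cos α) :=
  circumcenter_in_sector_iff_general O C C' V α hα₀ hα₁ hangle hV
end

section
/- Conversely to the regular case: if a convex polygon V₀,...,V_{n-1} (n ≥ 3) is such that its edges are perpendicular bisectors of segments O C_i, all the points C_i are at the same distance from O, and consecutive angles ∠C_i O C_{i+1} are all equal, then the polygon V₀,...,V_{n-1} is regular and O is its center. -/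
/-! The vertex `V i` lies on the perpendicular bisectors of `O C_i` and `O C_{i+1}`. As the rays
`O C_i`, `O C_{i+1}` make the angle `2π/n ∈ (0, π)`, these bisectors meet in a single point. That
point is found on the bisector of the angle at `O`, at the distance `ρ` with `2 ρ cos (π/n) = r`,
so every vertex is the rotation of `C_i` by `π/n` about `O`, rescaled by `ρ / r`. -/
open Real EuclideanGeometry

open ComplexConjugate

theorem Complex.eq_zero_of_inner_eq_zero_of_im_ne_zero {a b d : ℂ} (hab : (b * conj a).im ≠ 0)
    (ha : inner ℝ d a = 0) (hb : inner ℝ d b = 0) : d = 0 := by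
  rw [Complex.inner] at ha hb
  simp only [Complex.mul_re, Complex.mul_im, Complex.conj_re, Complex.conj_im] at ha hb hab
  have hre : d.re * (b.im * a.re - b.re * a.im) = 0 := by
    linear_combination b.im * ha - a.im * hb
  have him : d.im * (b.im * a.re - b.re * a.im) = 0 := by
    linear_combination a.re * hb - b.re * ha
  have hdet : b.im * a.re - b.re * a.im ≠ 0 := by contrapose! hab; linarith
  exact Complex.ext (by simpa [hdet] using hre) (by simpa [hdet] using him)

theorem Complex.eq_of_dist_eq_of_dist_eq_of_im_ne_zero {O A B x y : ℂ}
    (hAB : ((B - O) * conj (A - O)).im ≠ 0)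
    (hxA : dist x O = dist x A) (hxB : dist x O = dist x B)
    (hyA : dist y O = dist y A) (hyB : dist y O = dist y B) : x = y := by
  have hA : inner ℝ (y - x) (A - O) = 0 := inner_vsub_vsub_of_dist_eq_of_dist_eq (p₂ := A)
    (by rw [dist_comm O, hxA, dist_comm]) (by rw [dist_comm O, hyA, dist_comm])
  have hB : inner ℝ (y - x) (B - O) = 0 := inner_vsub_vsub_of_dist_eq_of_dist_eq (p₂ := B)
    (by rw [dist_comm O, hxB, dist_comm]) (by rw [dist_comm O, hyB, dist_comm])
  exact (sub_eq_zero.1 (Complex.eq_zero_of_inner_eq_zero_of_im_ne_zero hAB hA hB)).symm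

theorem Complex.norm_ofReal_mul_exp_sub_ofReal {ρ r β : ℝ} (h : 2 * ρ * Real.cos β = r) :
    ‖(ρ : ℂ) * Complex.exp (β * Complex.I) - r‖ = |ρ| := by
  rw [← sq_eq_sq₀ (norm_nonneg _) (abs_nonneg _), sq_abs, Complex.sq_norm, Complex.normSq_apply]
  simp only [Complex.sub_re, Complex.sub_im, Complex.mul_re, Complex.mul_im, Complex.ofReal_re,
    Complex.ofReal_im, Complex.exp_ofReal_mul_I_re, Complex.exp_ofReal_mul_I_im]
  linear_combination ρ ^ 2 * Real.sin_sq_add_cos_sq β - r * h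

theorem Complex.dist_eq_dist_of_two_mul_cos_eq (O : ℂ) {ρ r β : ℝ} (h : 2 * ρ * Real.cos β = r)
    (α : ℝ) :
    dist (O + ρ * Complex.exp (↑(α + β) * Complex.I)) O =
        dist (O + ρ * Complex.exp (↑(α + β) * Complex.I)) (O + r * Complex.exp (α * Complex.I)) ∧
      dist (O + ρ * Complex.exp (↑(α + β) * Complex.I)) O =
        dist (O + ρ * Complex.exp (↑(α + β) * Complex.I))
          (O + r * Complex.exp (↑(α + 2 * β) * Complex.I)) := by
  have h₁ : ρ * Complex.exp (↑(α + β) * Complex.I) - r * Complex.exp (α * Complex.I) =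
      Complex.exp (α * Complex.I) * (ρ * Complex.exp (β * Complex.I) - r) := by
    rw [Complex.ofReal_add, add_mul, Complex.exp_add]
    ring
  have h₂ : ρ * Complex.exp (↑(α + β) * Complex.I) - r * Complex.exp (↑(α + 2 * β) * Complex.I) =
      Complex.exp (↑(α + 2 * β) * Complex.I) * (ρ * Complex.exp (↑(-β) * Complex.I) - r) := by
    rw [mul_sub, mul_left_comm, ← Complex.exp_add]
    push_cast
    ring_nf
  have h' : 2 * ρ * Real.cos (-β) = r := by rwa [Real.cos_neg]
  simp only [Complex.dist_eq, add_sub_cancel_left, add_sub_add_left_eq_sub, h₁, h₂, norm_mul,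
    Complex.norm_real, Real.norm_eq_abs, Complex.norm_exp_ofReal_mul_I, one_mul, mul_one,
    Complex.norm_ofReal_mul_exp_sub_ofReal h, Complex.norm_ofReal_mul_exp_sub_ofReal h', and_self]

theorem Complex.im_ofReal_mul_exp_mul_conj (r α γ : ℝ) :
    (r * Complex.exp (γ * Complex.I) * conj (r * Complex.exp (α * Complex.I))).im =
      r ^ 2 * Real.sin (γ - α) := by
  simp only [Complex.mul_im, Complex.mul_re, Complex.conj_re, Complex.conj_im, Complex.ofReal_re,
    Complex.ofReal_im, Complex.exp_ofReal_mul_I_re, Complex.exp_ofReal_mul_I_im, Real.sin_sub]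
  ring

theorem Complex.exp_angle_mod (θ : ℝ) {n : ℕ} (hn : n ≠ 0) (k : ℕ) :
    Complex.exp (↑(θ + 2 * π * ↑(k % n) / n) * Complex.I) =
      Complex.exp (↑(θ + 2 * π * k / n) * Complex.I) := by
  have hn' : (n : ℂ) ≠ 0 := Nat.cast_ne_zero.2 hn
  conv_rhs => rw [← Nat.mod_add_div k n]
  rw [← mul_one (Complex.exp (↑(θ + 2 * π * ↑(k % n) / n) * Complex.I)),
    ← Complex.exp_nat_mul_two_pi_mul_I (k / n), ← Complex.exp_add]
  congr 1
  push_cast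
  field_simp
  ring

theorem Complex.exp_angle_fin_add_one (θ : ℝ) {n : ℕ} [NeZero n] (i : Fin n) :
    Complex.exp (↑(θ + 2 * π * ↑((i + 1 : Fin n) : ℕ) / n) * Complex.I) =
      Complex.exp (↑(θ + 2 * π * (i : ℕ) / n + 2 * (π / n)) * Complex.I) := by
  rw [Fin.val_add, Fin.val_one', Nat.add_mod_mod, Complex.exp_angle_mod θ (NeZero.ne n)]
  congr 3
  push_cast
  ring

/-- (Converse to the regular case.)  Work in the Euclidean plane
`ℂ`.  Suppose the points `C_i` all lie at the same distance `r > 0` from `O`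
and consecutive rays `O C_i`, `O C_{i+1}` subtend equal angles `2π/n`
(i.e. `C_i = O + r·exp((θ₀ + 2πi/n)·I)`), and suppose the edge `V_{i-1} V_i`
of a convex polygon lies on the perpendicular bisector of `O C_i`
(i.e. `dist(V_{i-1}, O) = dist(V_{i-1}, C_i)` and `dist(V_i, O) = dist(V_i, C_i)`
for all `i`).  Then the polygon `V₀, …, V_{n-1}` is regular with center `O`:
its vertices are equidistant from `O` and consecutive vertices subtend equal
angles at `O`. -/
theorem regular_rays_perpBisector_edges_imp_regular_polygon
    (n : ℕ) [NeZero n] (hn : 3 ≤ n) (O : ℂ) (r θ₀ : ℝ) (hr : 0 < r)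
    (C V : Fin n → ℂ)
    (hC : ∀ i : Fin n,
      C i = O + (r : ℂ) * Complex.exp (((θ₀ + 2 * π * (i : ℕ) / n : ℝ) : ℂ) * Complex.I))
    (hV : ∀ i : Fin n,
      dist (V (i - 1)) O = dist (V (i - 1)) (C i) ∧ dist (V i) O = dist (V i) (C i)) :
    ∃ r' : ℝ, 0 < r' ∧ ∃ θ' : ℝ, ∀ i : Fin n,
      V i = O + (r' : ℂ) * Complex.exp (((θ' + 2 * π * (i : ℕ) / n : ℝ) : ℂ) * Complex.I) := by
  set β := π / n
  have hβ : 0 < β ∧ β < π / 2 := by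
    have hn' : (3 : ℝ) ≤ n := by exact_mod_cast hn
    exact ⟨by positivity, div_lt_div_of_pos_left pi_pos two_pos (by linarith)⟩
  have hcos : 0 < Real.cos β := cos_pos_of_mem_Ioo ⟨by linarith, hβ.2⟩
  refine ⟨r / (2 * Real.cos β), by positivity, θ₀ + β, fun i => ?_⟩
  set α := θ₀ + 2 * π * (i : ℕ) / n
  have hCsucc : C (i + 1) = O + r * Complex.exp (↑(α + 2 * β) * Complex.I) := by
    rw [hC, Complex.exp_angle_fin_add_one]
  have hP := Complex.dist_eq_dist_of_two_mul_cos_eq O (ρ := r / (2 * Real.cos β)) (r := r)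
    (by field_simp) α
  rw [show θ₀ + β + 2 * π * (i : ℕ) / n = α + β by ring]
  refine Complex.eq_of_dist_eq_of_dist_eq_of_im_ne_zero (A := C i) (B := C (i + 1)) ?_
    (hV i).2 (by simpa using (hV (i + 1)).1) (hC i ▸ hP.1) (by rw [hCsucc]; exact hP.2)
  rw [hCsucc, hC, add_sub_cancel_left, add_sub_cancel_left, Complex.im_ofReal_mul_exp_mul_conj,
    show α + 2 * β - α = 2 * β by ring]
  have hsin : 0 < Real.sin (2 * β) := sin_pos_of_pos_of_lt_pi (by linarith) (by linarith)
  positivity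
end

section
/- Let O, C, C' be points with 0 < ∠COC' = α < π/2 and let V be the circumcenter of triangle OCC'. If |OC'| = |OC|/cos α then V lies on the ray OC' (at the point (1/2)|OC|/cos α · direction), and if |OC'| = |OC|·cos α then V lies on the ray OC; i.e., the bounds of the inequality |OC|cos α < |OC'| < |OC|/cos α correspond to V lying on the boundary rays of the sector. -/
open Real EuclideanGeometry

/-!
The hypothesis `|OC'| cos α = |OC|` (resp. `|OC| cos α = |OC'|`) says that the projection of `C'`
onto the line `OC` is `C` (resp. that of `C` onto `OC'` is `C'`), i.e. the triangle has a right
angle at `C` (resp. `C'`). By Thales the midpoint of the hypotenuse is then equidistant from the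
three vertices, and in the plane two points equidistant from three distinct points coincide.
-/

section

variable {V P : Type*} [NormedAddCommGroup V] [InnerProductSpace ℝ V] [MetricSpace P]
  [NormedAddTorsor V P]

theorem inner_vsub_eq_dist_sq_of_dist_mul_cos_angle_eq {O C C' : P}
    (h : dist O C' * Real.cos (∠ C O C') = dist O C) :
    inner ℝ (C -ᵥ O) (C' -ᵥ O) = dist O C ^ 2 := by
  rw [← InnerProductGeometry.cos_angle_mul_norm_mul_norm, ← dist_eq_norm_vsub',
    ← dist_eq_norm_vsub', ← h, EuclideanGeometry.angle]
  ring

theorem dist_midpoint_eq_of_inner_vsub_eq {O C C' : P}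
    (h : inner ℝ (C -ᵥ O) (C' -ᵥ O) = dist O C ^ 2) :
    dist (midpoint ℝ O C') O = dist (midpoint ℝ O C') C := by
  rw [← AffineSubspace.mem_perpBisector_iff_dist_eq, AffineSubspace.mem_perpBisector_iff_inner_eq,
    midpoint_vsub_left, real_inner_smul_left, real_inner_comm, h]
  norm_num
  ring

theorem eq_of_equidistant_of_finrank_eq_two [FiniteDimensional ℝ V] (hd : Module.finrank ℝ V = 2)
    {p₁ p₂ p₃ c c' : P} (h₁₂ : p₁ ≠ p₂) (h₁₃ : p₁ ≠ p₃) (h₂₃ : p₂ ≠ p₃)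
    (hc : dist c p₁ = dist c p₂ ∧ dist c p₁ = dist c p₃)
    (hc' : dist c' p₁ = dist c' p₂ ∧ dist c' p₁ = dist c' p₃) : c = c' := by
  rw [dist_comm c, dist_comm c, dist_comm c] at hc
  rw [dist_comm c', dist_comm c', dist_comm c'] at hc'
  by_contra hne
  rcases eq_of_dist_eq_of_dist_eq_of_finrank_eq_two hd hne h₁₃ rfl hc.2.symm hc.1.symm
    rfl hc'.2.symm hc'.1.symm with h | h
  · exact h₁₂ h.symm
  · exact h₂₃ h

theorem eq_midpoint_of_inner_vsub_eq [FiniteDimensional ℝ V] (hd : Module.finrank ℝ V = 2)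
    {O C C' c : P} (hC : O ≠ C) (hC' : O ≠ C') (hCC' : C ≠ C')
    (h : inner ℝ (C -ᵥ O) (C' -ᵥ O) = dist O C ^ 2)
    (hc : dist c O = dist c C ∧ dist c O = dist c C') : c = midpoint ℝ O C' :=
  eq_of_equidistant_of_finrank_eq_two hd hC hC' hCC' hc
    ⟨dist_midpoint_eq_of_inner_vsub_eq h, by rw [dist_midpoint_left, dist_midpoint_right]⟩

end

/-- Let `O`, `C`, `C'` be points of the Euclidean plane `ℂ` with
`O ≠ C`, `O ≠ C'` and `∠C O C' = α`, `0 < α < π/2`, and let `V` be the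
circumcenter of triangle `O C C'` (the point equidistant from the three
vertices).  If `|OC'| = |OC| / cos α` then `V` lies on the ray `OC'`, at
distance `(1/2)|OC| / cos α` from `O`; and if `|OC'| = |OC|·cos α` then `V`
lies on the ray `OC`.  Thus the bounds of the inequality
`|OC|·cos α < |OC'| < |OC|/cos α` correspond to `V` lying on the boundary rays
of the sector. -/
theorem circumcenter_on_boundary_rays
    (O C C' V : ℂ) (α : ℝ)
    (hC : O ≠ C) (hC' : O ≠ C')
    (hα₀ : 0 < α) (hα₁ : α < π / 2)
    (hangle : EuclideanGeometry.angle C O C' = α)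
    (hV : dist V O = dist V C ∧ dist V O = dist V C') :
    (dist O C' = dist O C / Real.cos α →
      (∃ t : ℝ, 0 ≤ t ∧ V = O + (t : ℂ) * (C' - O)) ∧
        dist O V = dist O C / (2 * Real.cos α)) ∧
    (dist O C' = dist O C * Real.cos α →
      ∃ t : ℝ, 0 ≤ t ∧ V = O + (t : ℂ) * (C - O)) := by
  have hcos : 0 < Real.cos α := Real.cos_pos_of_mem_Ioo ⟨by linarith, hα₁⟩
  have hCC' : C ≠ C' := by
    rintro rfl
    rw [angle_self_of_ne hC.symm] at hangle
    exact hα₀.ne hangle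
  have hmid (z : ℂ) : midpoint ℝ O z = O + ((1 / 2 : ℝ) : ℂ) * (z - O) := by
    rw [midpoint, AffineMap.lineMap_apply, Complex.real_smul]
    norm_num
    ring
  refine ⟨fun h ↦ ?_, fun h ↦ ?_⟩
  · have hVmid := eq_midpoint_of_inner_vsub_eq Complex.finrank_real_complex hC hC' hCC'
      (inner_vsub_eq_dist_sq_of_dist_mul_cos_angle_eq (by rw [hangle, h]; field_simp)) hV
    refine ⟨⟨1 / 2, by norm_num, hVmid.trans (hmid C')⟩, ?_⟩
    rw [hVmid, dist_left_midpoint, h]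
    norm_num
    ring
  · have hVmid := eq_midpoint_of_inner_vsub_eq Complex.finrank_real_complex hC' hC hCC'.symm
      (inner_vsub_eq_dist_sq_of_dist_mul_cos_angle_eq (by rw [angle_comm, hangle, h]))
      ⟨hV.2, hV.1⟩
    exact ⟨1 / 2, by norm_num, hVmid.trans (hmid C)⟩
end
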